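/- Fix (x, t) ∈ ℝ × ℝ with |e^t · sinh x| < 1, and define u(x, t) = arccos(e^t · sinh x) on this open set. Then u satisfies the graphical curve shortening flow equation ∂u/∂t = (∂²u/∂x²) / (1 + (∂u/∂x)²) at (x, t). -/

import Mathlib

/-!
Write `v = eᵗ sinh x`. Both `∂ₜ v` and `∂ₓ² v` equal `v`, so the chain rule for `arccos` gives
`u_t = -v / √(1 - v²)` and `u_xx = -v (1 - v² + v_x²) / (1 - v²)^(3/2)`, while
`1 + u_x² = (1 - v² + v_x²) / (1 - v²)`; the common factor `1 - v² + v_x²` cancels.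
-/

open Real Filter Topology

theorem HasDerivAt.arccos_of_abs_lt_one {f : ℝ → ℝ} {f' x : ℝ} (hf : HasDerivAt f f' x)
    (h : |f x| < 1) : HasDerivAt (fun y => arccos (f y)) (-f' / √(1 - f x ^ 2)) x := by
  obtain ⟨hlo, hhi⟩ := abs_lt.mp h
  exact ((hasDerivAt_arccos hlo.ne' hhi.ne).comp x hf).congr_deriv (by ring)

theorem hasDerivAt_deriv_arccos_comp {f f' : ℝ → ℝ} {f'' x : ℝ}
    (hf : ∀ y, HasDerivAt f (f' y) y) (hf' : HasDerivAt f' f'' x) (h : |f x| < 1) :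
    HasDerivAt (deriv fun y => arccos (f y))
      (-(f'' * (1 - f x ^ 2) + f x * f' x ^ 2) / √(1 - f x ^ 2) ^ 3) x := by
  have hD : 0 < 1 - f x ^ 2 := sub_pos.mpr ((sq_lt_one_iff_abs_lt_one _).mpr h)
  have hfirst : deriv (fun y => arccos (f y)) =ᶠ[𝓝 x] fun y => -f' y / √(1 - f y ^ 2) := by
    have hcont : ContinuousAt (fun y => |f y|) x := (hf x).continuousAt.abs
    filter_upwards [hcont.eventually_lt continuousAt_const h] with y hy
    exact ((hf y).arccos_of_abs_lt_one hy).deriv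
  have hsqrt : HasDerivAt (fun y => √(1 - f y ^ 2))
      (-(2 * f x * f' x) / (2 * √(1 - f x ^ 2))) x :=
    ((((hf x).fun_pow 2).const_sub 1).sqrt hD.ne').congr_deriv (by push_cast; ring)
  refine HasDerivAt.congr_of_eventuallyEq ?_ hfirst
  refine (hf'.neg.fun_div hsqrt (sqrt_pos.mpr hD).ne').congr_deriv ?_
  field_simp
  rw [sq_sqrt hD.le, Pi.neg_apply]
  ring

/-- The hairclip `u(x, t) = arccos (eᵗ sinh x)`, defined where `|eᵗ sinh x| < 1`,
satisfies the graphical curve shortening flow equation `u_t = u_xx / (1 + u_x ^ 2)`. -/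
theorem hairclip_satisfies_graphical_csf (x t : ℝ)
    (h : |Real.exp t * Real.sinh x| < 1) :
    (deriv (fun s : ℝ => Real.arccos (Real.exp s * Real.sinh x)) t) =
      (deriv (fun z : ℝ =>
          deriv (fun w : ℝ => Real.arccos (Real.exp t * Real.sinh w)) z) x) /
        (1 + (deriv (fun w : ℝ => Real.arccos (Real.exp t * Real.sinh w)) x) ^ 2) := by
  have hsinh (w : ℝ) : HasDerivAt (fun w => exp t * sinh w) (exp t * cosh w) w :=
    (hasDerivAt_sinh w).const_mul _
  have hcosh : HasDerivAt (fun w => exp t * cosh w) (exp t * sinh x) x :=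
    (hasDerivAt_cosh x).const_mul _
  have hexp : HasDerivAt (fun s => exp s * sinh x) (exp t * sinh x) t :=
    (hasDerivAt_exp t).mul_const _
  rw [(hexp.arccos_of_abs_lt_one h).deriv, ((hsinh x).arccos_of_abs_lt_one h).deriv,
    (hasDerivAt_deriv_arccos_comp hsinh hcosh h).deriv]
  set v := exp t * sinh x
  have hD : 0 < 1 - v ^ 2 := sub_pos.mpr ((sq_lt_one_iff_abs_lt_one _).mpr h)
  have hq : 0 < √(1 - v ^ 2) := sqrt_pos.mpr hD
  have hq2 : √(1 - v ^ 2) ^ 2 = 1 - v ^ 2 := sq_sqrt hD.le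
  set q := √(1 - v ^ 2)
  field_simp
  rw [hq2]
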